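/- arXiv:2411.12548 — 7 statements merged into one kernel-verified Lean document; each statement's English description precedes it below -/
import Mathlib

section
/- Let G be a finite connected simple graph with minimum degree δ_min(G) ≥ 2. Then diam(G) ≤ 3|G|/(δ_min(G)+1) − 1. -/
open SimpleGraph Finset

private lemma aux_dist_getVert_le {V : Type*} {G : SimpleGraph V} (hc : G.Connected) :
    ∀ {u v : V} (p : G.Walk u v) (i : ℕ), G.dist u (p.getVert i) ≤ i := by
  intro u v p
  induction p with
  | nil =>
    intro i
    rw [SimpleGraph.Walk.getVert_of_length_le _ (by simp)]
    simp [SimpleGraph.dist_self]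
  | @cons a b c h q ih =>
    intro i
    cases i with
    | zero => simp
    | succ n =>
      have h1 : G.dist a b ≤ 1 := by
        have := SimpleGraph.dist_le h.toWalk
        simpa using this
      calc G.dist a ((q.cons h).getVert (n + 1)) = G.dist a (q.getVert n) := rfl
        _ ≤ G.dist a b + G.dist b (q.getVert n) := hc.dist_triangle
        _ ≤ 1 + n := add_le_add h1 (ih n)
        _ = n + 1 := by omega

private lemma aux_dist_getVert_ge {V : Type*} {G : SimpleGraph V} (hc : G.Connected)
    {u v : V} (p : G.Walk u v) (i : ℕ) (hi : i ≤ p.length) :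
    G.dist (p.getVert i) v ≤ p.length - i := by
  have := aux_dist_getVert_le hc p.reverse (p.length - i)
  rw [SimpleGraph.Walk.getVert_reverse] at this
  have h2 : p.length - (p.length - i) = i := by omega
  rw [h2] at this
  rw [SimpleGraph.dist_comm]
  exact this

theorem stmt_9 {V : Type*} [Fintype V]
    (G : SimpleGraph V) [DecidableRel G.Adj] (hc : G.Connected)
    (hδ : 2 ≤ G.minDegree) :
    (G.diam : ℝ) ≤ 3 * (Fintype.card V : ℝ) / ((G.minDegree : ℝ) + 1) - 1 := by
  classical
  have hne : Nonempty V := hc.nonempty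
  set d := G.diam with hd
  set δ := G.minDegree with hδ'
  obtain ⟨u, v, huv⟩ := G.exists_dist_eq_diam
  obtain ⟨p, hp⟩ := hc.exists_walk_length_eq_dist u v
  have hplen : p.length = d := by rw [hp, huv]
  set k := d / 3 with hk
  -- the selected vertices
  set w : ℕ → V := fun j => p.getVert (3 * j) with hw
  -- distances
  have hdistu_le : ∀ j, G.dist u (w j) ≤ 3 * j := fun j => aux_dist_getVert_le hc p _
  have hdistu_ge : ∀ j, j ≤ k → 3 * j ≤ G.dist u (w j) := by
    intro j hj
    have h3j : 3 * j ≤ p.length := by omega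
    have h1 : G.dist (w j) v ≤ p.length - 3 * j := aux_dist_getVert_ge hc p _ h3j
    have h2 : G.dist u v ≤ G.dist u (w j) + G.dist (w j) v := hc.dist_triangle
    have h3 : G.dist u v = d := huv
    omega
  have hfar : ∀ a b, a < b → b ≤ k → 3 ≤ G.dist (w a) (w b) := by
    intro a b hab hbk
    have h1 := hdistu_le a
    have h2 := hdistu_ge b hbk
    have h3 : G.dist u (w b) ≤ G.dist u (w a) + G.dist (w a) (w b) := hc.dist_triangle
    omega
  -- closed neighborhoods
  set N : ℕ → Finset V := fun j => insert (w j) (G.neighborFinset (w j)) with hN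
  have hcard : ∀ j, δ + 1 ≤ (N j).card := by
    intro j
    have h1 : (N j).card = G.degree (w j) + 1 := by
      rw [hN]
      rw [Finset.card_insert_of_notMem (by simp)]
      rfl
    rw [h1]
    have := G.minDegree_le_degree (w j)
    omega
  have hdisj : ∀ a ∈ Finset.range (k + 1), ∀ b ∈ Finset.range (k + 1), a ≠ b →
      Disjoint (N a) (N b) := by
    have key : ∀ a b, a < b → b ≤ k → Disjoint (N a) (N b) := by
      intro a b hab hbk
      rw [Finset.disjoint_left]
      intro z hza hzb
      have hda : G.dist (w a) z ≤ 1 := by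
        rw [hN, Finset.mem_insert] at hza
        rcases hza with h | h
        · subst h; simp [SimpleGraph.dist_self]
        · rw [SimpleGraph.mem_neighborFinset] at h
          simpa using SimpleGraph.dist_le h.toWalk
      have hdb : G.dist z (w b) ≤ 1 := by
        rw [hN, Finset.mem_insert] at hzb
        rcases hzb with h | h
        · subst h; simp [SimpleGraph.dist_self]
        · rw [SimpleGraph.mem_neighborFinset] at h
          rw [SimpleGraph.dist_comm]
          simpa using SimpleGraph.dist_le h.toWalk
      have htri : G.dist (w a) (w b) ≤ G.dist (w a) z + G.dist z (w b) := hc.dist_triangle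
      have := hfar a b hab hbk
      omega
    intro a ha b hb hab
    rw [Finset.mem_range] at ha hb
    rcases lt_or_gt_of_ne hab with h | h
    · exact key a b h (by omega)
    · exact (key b a h (by omega)).symm
  -- counting
  have hcount : (k + 1) * (δ + 1) ≤ Fintype.card V := by
    calc (k + 1) * (δ + 1) = ∑ _j ∈ Finset.range (k + 1), (δ + 1) := by
          rw [Finset.sum_const, Finset.card_range, smul_eq_mul]
      _ ≤ ∑ j ∈ Finset.range (k + 1), (N j).card :=
          Finset.sum_le_sum (fun j _ => hcard j)
      _ = ((Finset.range (k + 1)).biUnion N).card := (Finset.card_biUnion hdisj).symm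
      _ ≤ Fintype.card V := by
          rw [← Finset.card_univ]; exact Finset.card_le_univ _
  -- arithmetic
  have hd32 : d ≤ 3 * k + 2 := by omega
  have hδpos : (0:ℝ) < (δ:ℝ) + 1 := by positivity
  have hcountR : ((k:ℝ) + 1) * ((δ:ℝ) + 1) ≤ (Fintype.card V : ℝ) := by
    exact_mod_cast hcount
  have h1 : 3 * ((k:ℝ) + 1) ≤ 3 * (Fintype.card V : ℝ) / ((δ:ℝ) + 1) := by
    rw [le_div_iff₀ hδpos]
    nlinarith
  have h2 : (d:ℝ) ≤ 3 * (k:ℝ) + 2 := by exact_mod_cast hd32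
  linarith
end

section
/- Let G be a finite connected simple graph with δ_min(G) ≥ 2. Then diam(G) ≤ 3|G|/δ_min(G). -/
private lemma walk_getVert_dist_le {V : Type*} {G : SimpleGraph V} (hc : G.Connected)
    {u v : V} (p : G.Walk u v) (i k : ℕ) :
    G.dist (p.getVert i) (p.getVert (i + k)) ≤ k := by
  induction k with
  | zero => simp
  | succ k ih =>
    by_cases h : i + k < p.length
    · have hadj : G.Adj (p.getVert (i + k)) (p.getVert (i + k + 1)) :=
        p.adj_getVert_succ h
      calc G.dist (p.getVert i) (p.getVert (i + (k + 1)))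
          ≤ G.dist (p.getVert i) (p.getVert (i + k)) +
            G.dist (p.getVert (i + k)) (p.getVert (i + k + 1)) := by
            have := hc.dist_triangle (u := p.getVert i) (v := p.getVert (i + k))
              (w := p.getVert (i + k + 1))
            simpa [Nat.add_assoc] using this
        _ ≤ k + 1 := by
            have h1 : G.dist (p.getVert (i + k)) (p.getVert (i + k + 1)) = 1 :=
              (SimpleGraph.dist_eq_one_iff_adj).mpr hadj
            omega
    · have h1 : p.getVert (i + k) = v := p.getVert_of_length_le (by omega)
      have h2 : p.getVert (i + (k + 1)) = v := p.getVert_of_length_le (by omega)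
      calc G.dist (p.getVert i) (p.getVert (i + (k + 1)))
          = G.dist (p.getVert i) (p.getVert (i + k)) := by rw [h1, h2]
        _ ≤ k + 1 := by omega

theorem stmt_10 {V : Type*} [Fintype V]
    (G : SimpleGraph V) [DecidableRel G.Adj] (hc : G.Connected)
    (hδ : 2 ≤ G.minDegree) :
    (G.diam : ℝ) ≤ 3 * (Fintype.card V : ℝ) / (G.minDegree : ℝ) := by
  classical
  have hne : Nonempty V := hc.nonempty
  set δ := G.minDegree with hδdef
  set n := Fintype.card V with hndef
  set d := G.diam with hddef
  -- key combinatorial bound : (d/3 + 1) * δ ≤ n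
  obtain ⟨u, v, huv⟩ := G.exists_dist_eq_diam
  obtain ⟨p, hp⟩ := (hc.exists_walk_length_eq_dist u v)
  have hpd : p.length = d := by rw [hp, huv]
  set k := d / 3 with hkdef
  -- distance lower bound along the walk
  have hdistlow : ∀ i j : ℕ, i ≤ j → j ≤ k →
      3 * (j - i) ≤ G.dist (p.getVert (3 * i)) (p.getVert (3 * j)) := by
    intro i j hij hjk
    have h3j : 3 * j ≤ d := by omega
    have h1 : G.dist u (p.getVert (3 * i)) ≤ 3 * i := by
      have := walk_getVert_dist_le hc p 0 (3 * i)
      simpa using this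
    have h2 : G.dist (p.getVert (3 * j)) v ≤ d - 3 * j := by
      have := walk_getVert_dist_le hc p (3 * j) (d - 3 * j)
      have hv : p.getVert (3 * j + (d - 3 * j)) = v := by
        have : 3 * j + (d - 3 * j) = d := by omega
        rw [this, ← hpd]; exact p.getVert_length
      rwa [hv] at this
    have htri : d ≤ G.dist u (p.getVert (3 * i)) +
        G.dist (p.getVert (3 * i)) (p.getVert (3 * j)) +
        G.dist (p.getVert (3 * j)) v := by
      calc d = G.dist u v := huv.symm
        _ ≤ G.dist u (p.getVert (3 * j)) + G.dist (p.getVert (3 * j)) v :=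
          hc.dist_triangle
        _ ≤ (G.dist u (p.getVert (3 * i)) +
              G.dist (p.getVert (3 * i)) (p.getVert (3 * j))) +
            G.dist (p.getVert (3 * j)) v := by
          gcongr
          exact hc.dist_triangle
    omega
  -- disjoint neighborhoods
  have hdisj : ∀ i j : Fin (k + 1), i ≠ j →
      Disjoint (G.neighborFinset (p.getVert (3 * i)))
               (G.neighborFinset (p.getVert (3 * j))) := by
    intro i j hij
    rw [Finset.disjoint_left]
    intro w hwi hwj
    rw [SimpleGraph.mem_neighborFinset] at hwi hwj
    have hd2 : G.dist (p.getVert (3 * (i : ℕ))) (p.getVert (3 * (j : ℕ))) ≤ 2 := by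
      calc G.dist (p.getVert (3 * (i : ℕ))) (p.getVert (3 * (j : ℕ)))
          ≤ G.dist (p.getVert (3 * (i : ℕ))) w + G.dist w (p.getVert (3 * (j : ℕ))) :=
            hc.dist_triangle
        _ ≤ 1 + 1 := by
            gcongr
            · exact le_of_eq ((SimpleGraph.dist_eq_one_iff_adj).mpr hwi)
            · exact le_of_eq ((SimpleGraph.dist_eq_one_iff_adj).mpr hwj.symm)
        _ = 2 := rfl
    rcases lt_or_gt_of_ne (fun h => hij (Fin.ext h) : (i : ℕ) ≠ (j : ℕ)) with h | h
    · have := hdistlow i j (le_of_lt h) (by omega)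
      omega
    · have := hdistlow j i (le_of_lt h) (by omega)
      rw [SimpleGraph.dist_comm] at hd2
      omega
  -- counting
  have hcount : (k + 1) * δ ≤ n := by
    have hcard : ((Finset.univ : Finset (Fin (k + 1))).biUnion
        (fun i => G.neighborFinset (p.getVert (3 * i)))).card =
        ∑ i : Fin (k + 1), (G.neighborFinset (p.getVert (3 * i))).card :=
      Finset.card_biUnion (fun i _ j _ hij => hdisj i j hij)
    have hle : ∑ i : Fin (k + 1), (G.neighborFinset (p.getVert (3 * i))).card ≤ n := by
      rw [← hcard, hndef]
      exact Finset.card_le_univ _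
    have hlow : (k + 1) * δ ≤ ∑ i : Fin (k + 1), (G.neighborFinset (p.getVert (3 * i))).card := by
      calc (k + 1) * δ = ∑ _i : Fin (k + 1), δ := by
            simp [Finset.sum_const, Nat.mul_comm]
        _ ≤ ∑ i : Fin (k + 1), (G.neighborFinset (p.getVert (3 * i))).card := by
            apply Finset.sum_le_sum
            intro i _
            have := G.minDegree_le_degree (p.getVert (3 * (i : ℕ)))
            rwa [← SimpleGraph.card_neighborFinset_eq_degree] at this
    omega
  -- final arithmetic: d * δ ≤ 3 * n
  have hfin : d * δ ≤ 3 * n := by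
    have hd3 : d ≤ 3 * k + 2 := by omega
    calc d * δ ≤ (3 * k + 3) * δ := by
          apply Nat.mul_le_mul_right; omega
      _ = 3 * ((k + 1) * δ) := by ring
      _ ≤ 3 * n := by omega
  have hδpos : (0 : ℝ) < (δ : ℝ) := by
    have : 0 < δ := by omega
    exact_mod_cast this
  rw [le_div_iff₀ hδpos]
  exact_mod_cast hfin
end

section
/- Let G be a finite simple graph on n ≥ 2 vertices with δ_min(G) ≥ ⌊n/2⌋. Then G is maximally edge-connected, i.e., its edge-connectivity λ(G) equals δ_min(G). -/
/-- The edge-connectivity of a finite simple graph: the minimum number of edges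
whose deletion disconnects the graph. -/
noncomputable def edgeConnectivity {V : Type*} [Fintype V] (G : SimpleGraph V) : ℕ :=
  sInf {k | ∃ F : Finset (Sym2 V), F.card = k ∧ (↑F : Set (Sym2 V)) ⊆ G.edgeSet ∧
    ¬ (G.deleteEdges ↑F).Connected}

open Finset in
lemma cut_lower_aux {V : Type*} [Fintype V] [DecidableEq V] (G : SimpleGraph V)
    [DecidableRel G.Adj]
    (hδ : Fintype.card V / 2 ≤ G.minDegree)
    (F : Finset (Sym2 V))
    (R : Finset V) (hne : R.Nonempty) (hne' : Rᶜ.Nonempty)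
    (hRc : R.card ≤ Fintype.card V / 2)
    (hcut : ∀ a ∈ R, ∀ b ∉ R, G.Adj a b → s(a, b) ∈ F) :
    G.minDegree ≤ F.card := by
  classical
  set δ := G.minDegree with hδdef
  set s := R.card with hs
  have hs1 : 1 ≤ s := hne.card_pos
  have hsδ : s ≤ δ := le_trans hRc hδ
  -- cross edges from each vertex
  set g : V → Finset (Sym2 V) := fun a => (Rᶜ.filter (G.Adj a)).image (fun b => s(a, b)) with hg
  have hgsub : ∀ a ∈ R, g a ⊆ F := by
    intro a ha e he
    simp only [hg, mem_image, mem_filter, mem_compl] at he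
    obtain ⟨b, ⟨hb, hab⟩, rfl⟩ := he
    exact hcut a ha b hb hab
  have hgcard : ∀ a ∈ R, (g a).card = (Rᶜ.filter (G.Adj a)).card := by
    intro a ha
    apply Finset.card_image_of_injOn
    intro b hb b' hb' hbe
    simp only [mem_coe, mem_filter, mem_compl] at hb hb'
    rcases Sym2.eq_iff.mp hbe with ⟨_, h⟩ | ⟨h1, h2⟩
    · exact h
    · exact absurd (h1 ▸ ha) hb'.1
  have hdisj : ∀ a ∈ R, ∀ a' ∈ R, a ≠ a' → Disjoint (g a) (g a') := by
    intro a ha a' ha' hne e he he'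
    intro x hx
    exfalso
    have h1 := he hx
    have h2 := he' hx
    simp only [hg, mem_image, mem_filter, mem_compl] at h1 h2
    obtain ⟨b, ⟨hb, hab⟩, rfl⟩ := h1
    obtain ⟨b', ⟨hb', hab'⟩, hbe⟩ := h2
    rcases Sym2.eq_iff.mp hbe with ⟨h3, _⟩ | ⟨h3, h4⟩
    · exact hne h3.symm
    · exact hb' (h4 ▸ ha)
  have hbiU : (R.biUnion g) ⊆ F := by
    intro e he
    obtain ⟨a, ha, hea⟩ := Finset.mem_biUnion.mp he
    exact hgsub a ha hea
  have hcross : ∀ a ∈ R, δ + 1 - s ≤ (Rᶜ.filter (G.Adj a)).card := by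
    intro a ha
    have hdeg : δ ≤ G.degree a := G.minDegree_le_degree a
    have hsubn : G.neighborFinset a ⊆ (R.erase a) ∪ (Rᶜ.filter (G.Adj a)) := by
      intro b hb
      rw [SimpleGraph.mem_neighborFinset] at hb
      by_cases hbR : b ∈ R
      · exact Finset.mem_union_left _ (Finset.mem_erase.mpr ⟨(G.ne_of_adj hb).symm, hbR⟩)
      · exact Finset.mem_union_right _ (Finset.mem_filter.mpr ⟨Finset.mem_compl.mpr hbR, hb⟩)
    have := Finset.card_le_card hsubn
    rw [SimpleGraph.card_neighborFinset_eq_degree] at this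
    have h2 := Finset.card_union_le (R.erase a) (Rᶜ.filter (G.Adj a))
    have h3 : (R.erase a).card = s - 1 := by rw [Finset.card_erase_of_mem ha, hs]
    omega
  calc δ ≤ s * (δ + 1 - s) := by
          obtain ⟨d, hd⟩ : ∃ d, δ = s + d := ⟨δ - s, by omega⟩
          have : δ + 1 - s = d + 1 := by omega
          rw [this, hd]
          nlinarith
    _ ≤ ∑ a ∈ R, (Rᶜ.filter (G.Adj a)).card := by
          have h0 : ∑ _a ∈ R, (δ + 1 - s) = s * (δ + 1 - s) := by
            rw [Finset.sum_const, smul_eq_mul, ← hs]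
          rw [← h0]
          exact Finset.sum_le_sum hcross
    _ = ∑ a ∈ R, (g a).card := by
          exact (Finset.sum_congr rfl hgcard).symm
    _ = (R.biUnion g).card := (Finset.card_biUnion hdisj).symm
    _ ≤ F.card := Finset.card_le_card hbiU

theorem stmt_11 {V : Type*} [Fintype V]
    (G : SimpleGraph V) [DecidableRel G.Adj]
    (hV : 2 ≤ Fintype.card V) (hδ : Fintype.card V / 2 ≤ G.minDegree) :
    edgeConnectivity G = G.minDegree := by
  classical
  have hnV : Nonempty V := Fintype.card_pos_iff.mp (by omega)
  -- upper bound: deleting all edges at a minimum-degree vertex disconnects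
  obtain ⟨v, hv⟩ := G.exists_minimal_degree_vertex
  have hmem : G.minDegree ∈ {k | ∃ F : Finset (Sym2 V), F.card = k ∧
      (↑F : Set (Sym2 V)) ⊆ G.edgeSet ∧ ¬ (G.deleteEdges ↑F).Connected} := by
    refine ⟨G.incidenceFinset v, ?_, ?_, ?_⟩
    · rw [G.card_incidenceFinset_eq_degree, hv]
    · intro e he
      rw [Finset.mem_coe, SimpleGraph.mem_incidenceFinset] at he
      exact he.1
    · intro hconn
      obtain ⟨w, hw⟩ := Fintype.exists_ne_of_one_lt_card (by omega) v
      obtain ⟨p⟩ := hconn.preconnected v w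
      cases p with
      | nil => exact hw rfl
      | cons h p =>
        rw [SimpleGraph.deleteEdges_adj] at h
        exact h.2 (by
          rw [Finset.mem_coe, SimpleGraph.mem_incidenceFinset]
          exact ⟨G.mem_edgeSet.mpr h.1, Sym2.mem_mk_left _ _⟩)
  refine le_antisymm (Nat.sInf_le hmem) (le_csInf ⟨_, hmem⟩ ?_)
  rintro k ⟨F, rfl, hsub, hdisc⟩
  -- lower bound
  set G' := G.deleteEdges (↑F : Set (Sym2 V)) with hG'
  have hpre : ¬ G'.Preconnected := fun h => hdisc ⟨h⟩
  rw [SimpleGraph.Preconnected] at hpre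
  push_neg at hpre
  obtain ⟨u, w, huw⟩ := hpre
  set S : Finset V := Finset.univ.filter (fun x => G'.Reachable u x) with hS
  have huS : u ∈ S := Finset.mem_filter.mpr ⟨Finset.mem_univ _, SimpleGraph.Reachable.refl u⟩
  have hwS : w ∈ Sᶜ := Finset.mem_compl.mpr (fun h => huw (Finset.mem_filter.mp h).2)
  have hcutS : ∀ a ∈ S, ∀ b ∉ S, G.Adj a b → s(a, b) ∈ F := by
    intro a ha b hb hab
    by_contra he
    refine hb (Finset.mem_filter.mpr ⟨Finset.mem_univ _, ?_⟩)
    have : G'.Adj a b := SimpleGraph.deleteEdges_adj.mpr ⟨hab, he⟩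
    exact ((Finset.mem_filter.mp ha).2).trans this.reachable
  have hcard : S.card + Sᶜ.card = Fintype.card V := Finset.card_add_card_compl S
  by_cases hle : S.card ≤ Sᶜ.card
  · apply cut_lower_aux G hδ F S ⟨u, huS⟩ ⟨w, hwS⟩ (by omega) hcutS
  · have hcutS' : ∀ a ∈ Sᶜ, ∀ b ∉ Sᶜ, G.Adj a b → s(a, b) ∈ F := by
      intro a ha b hb hab
      have hbS : b ∈ S := by rwa [Finset.mem_compl, not_not] at hb
      have haS : a ∉ S := Finset.mem_compl.mp ha
      have := hcutS b hbS a haS hab.symm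
      rwa [Sym2.eq_swap] at this
    apply cut_lower_aux G hδ F Sᶜ ⟨w, hwS⟩ ⟨u, by rwa [compl_compl]⟩ (by omega) hcutS'
end

section
/- Fix integers n ≥ 3 and k ≥ 1, and let H(n,k) be the Hamming graph whose vertices are tuples I = (i_1,…,i_k) ∈ [n]^k, with I adjacent to J iff they differ in exactly one coordinate. Then for every pair of distinct vertices I, J of H(n,k) there exist at least n − 1 pairwise edge-disjoint paths from I to J, each of length at most k + 1. -/
open Finset

/-- The Hamming graph on `[n]^k`: two tuples are adjacent iff they differ in
exactly one coordinate. -/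
def hammingGraph (n k : ℕ) : SimpleGraph (Fin k → Fin n) where
  Adj I J := hammingDist I J = 1
  symm := by
    constructor
    intro I J h
    show hammingDist J I = 1
    rwa [hammingDist_comm]
  loopless := by
    constructor
    intro I h
    change hammingDist I I = 1 at h
    rw [hammingDist_self] at h
    exact one_ne_zero h.symm

/-!
Fix a coordinate `c` (any one works). For each value `a ≠ J c`, walk from `I` to `I[c ↦ a]`,
then along a geodesic to `J[c ↦ a]`, which keeps coordinate `c` at `a`, and finally to `J`: at
most `1 + (k - 1) + 1` steps. Projected to coordinate `c`, each edge of the `a`-th walk becomes a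
pair `{x, a}` with `x ∈ {I c, J c, a}`, and for distinct `a, b ≠ J c` no such pair is also of the
form `{y, b}`. Shortcutting the walks to paths only removes edges.
-/

open SimpleGraph Function

section Hamming

variable {ι : Type*} [Fintype ι] [DecidableEq ι] {β : ι → Type*} [∀ i, DecidableEq (β i)]

theorem hammingDist_update_le_one (x : ∀ i, β i) (i : ι) (a : β i) :
    hammingDist x (update x i a) ≤ 1 := by
  calc hammingDist x (update x i a) ≤ #{i} := by
        refine card_le_card fun j hj => ?_
        by_contra hji
        simp_all [update_of_ne (Finset.notMem_singleton.1 hji)]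
    _ = 1 := card_singleton i

theorem hammingDist_update_self_add_one {x y : ∀ i, β i} {i : ι} (h : x i ≠ y i) :
    hammingDist (update x i (y i)) y + 1 = hammingDist x y := by
  have hdiff : ({j | update x i (y i) j ≠ y j} : Finset ι) =
      ({j | x j ≠ y j} : Finset ι).erase i := by
    ext j
    by_cases hji : j = i
    · subst hji; simp
    · simp [hji]
  rw [hammingDist, hammingDist, hdiff, card_erase_add_one (by simpa using h)]

theorem hammingDist_le_card_sub_one_of_eq {x y : ∀ i, β i} {i : ι} (h : x i = y i) :
    hammingDist x y ≤ Fintype.card ι - 1 := by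
  calc hammingDist x y ≤ #(univ.erase i) := card_le_card fun j hj => by
        simp only [mem_filter, mem_univ, true_and] at hj
        exact mem_erase.2 ⟨fun hji => hj (hji ▸ h), mem_univ j⟩
    _ = Fintype.card ι - 1 := by rw [card_erase_of_mem (mem_univ i), card_univ]

end Hamming

section CoordinateProjection

variable {ι : Type*} {β : ι → Type*} {G : SimpleGraph (∀ i, β i)} {X Y : ∀ i, β i}

theorem SimpleGraph.Walk.edges_map_eval_of_eq (p : G.Walk X Y)
    (hp : ∀ v ∈ p.support, ∀ i, v i = X i ∨ v i = Y i) {c : ι} (hc : X c = Y c) :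
    ∀ e ∈ p.edges, e.map (· c) = s(X c, X c) := by
  intro e he
  induction e using Sym2.ind with | _ u v
  have hu := hp u (p.fst_mem_support_of_mem_edges he) c
  have hv := hp v (p.snd_mem_support_of_mem_edges he) c
  rw [← hc] at hu hv
  rw [Sym2.map_mk, hu.elim id id, hv.elim id id]

theorem SimpleGraph.Walk.edges_map_eval_of_eqOn_ne [DecidableEq ι] (p : G.Walk X Y)
    (hp : ∀ v ∈ p.support, ∀ i, v i = X i ∨ v i = Y i) {c : ι} (hXY : ∀ i ≠ c, X i = Y i) :
    ∀ e ∈ p.edges, e.map (· c) = s(X c, Y c) := by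
  intro e he
  induction e using Sym2.ind with | _ u v
  have hu := hp u (p.fst_mem_support_of_mem_edges he)
  have hv := hp v (p.snd_mem_support_of_mem_edges he)
  -- adjacent vertices differ, and off `c` both agree with `X`, so they differ at `c`
  have huv : u c ≠ v c := fun h => (p.adj_of_mem_edges he).ne <| funext fun i => by
    by_cases hic : i = c
    · subst hic; exact h
    · have := hXY i hic
      rcases hu i with hu | hu <;> rcases hv i with hv | hv <;> simp_all
  rw [Sym2.map_mk, Sym2.eq_iff]
  rcases hu c with hu | hu <;> rcases hv c with hv | hv <;> simp_all

end CoordinateProjection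

theorem Sym2.mk_ne_mk_of_mem_triple {α : Type*} {p q a b x y : α} (hab : a ≠ b) (ha : a ≠ q)
    (hb : b ≠ q) (hx : x = p ∨ x = q ∨ x = a) (hy : y = p ∨ y = q ∨ y = b) :
    s(x, a) ≠ s(y, b) := by
  rw [Ne, Sym2.eq_iff]
  grind

namespace hammingGraph

variable {n k : ℕ}

theorem adj_update_self {X : Fin k → Fin n} {i : Fin k} {a : Fin n} (h : X i ≠ a) :
    (hammingGraph n k).Adj X (update X i a) :=
  le_antisymm (hammingDist_update_le_one X i a)
    (hammingDist_pos.2 fun hX => h (by rw [hX, update_self]))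

theorem exists_walk_length_eq_hammingDist (X Y : Fin k → Fin n) :
    ∃ p : (hammingGraph n k).Walk X Y,
      p.length = hammingDist X Y ∧ ∀ v ∈ p.support, ∀ i, v i = X i ∨ v i = Y i := by
  induction hd : hammingDist X Y generalizing X with
  | zero =>
    obtain rfl := hammingDist_eq_zero.1 hd
    exact ⟨.nil, rfl, by simp⟩
  | succ d ih =>
    obtain ⟨i, hi⟩ := Function.ne_iff.1 (hammingDist_pos (x := X) (y := Y) |>.1 (by omega))
    obtain ⟨p, hlen, hp⟩ :=
      ih (update X i (Y i)) (Nat.add_right_cancel ((hammingDist_update_self_add_one hi).trans hd))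
    refine ⟨.cons (adj_update_self hi) p, by simp [hlen], ?_⟩
    simp only [Walk.support_cons, List.mem_cons, forall_eq_or_imp, true_or, implies_true,
      true_and]
    intro v hv j
    rcases hp v hv j with h | h
    · rw [update_apply] at h
      split_ifs at h with hji
      · exact Or.inr (hji ▸ h)
      · exact Or.inl h
    · exact Or.inr h

theorem exists_walk_edges_map_eval (I J : Fin k → Fin n) (c : Fin k) (a : Fin n) :
    ∃ W : (hammingGraph n k).Walk I J, W.length ≤ k + 1 ∧
      ∀ e ∈ W.edges, ∃ x, (x = I c ∨ x = J c ∨ x = a) ∧ e.map (· c) = s(x, a) := by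
  obtain ⟨p₁, hlen₁, hp₁⟩ := exists_walk_length_eq_hammingDist I (update I c a)
  obtain ⟨p₂, hlen₂, hp₂⟩ := exists_walk_length_eq_hammingDist (update I c a) (update J c a)
  obtain ⟨p₃, hlen₃, hp₃⟩ := exists_walk_length_eq_hammingDist (update J c a) J
  refine ⟨p₁.append (p₂.append p₃), ?_, ?_⟩
  · have h₁ := hammingDist_update_le_one I c a
    have h₂ := hammingDist_le_card_sub_one_of_eq (i := c)
      (x := update I c a) (y := update J c a) (by simp)
    have h₃ := hammingDist_update_le_one J c a
    rw [hammingDist_comm] at h₃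
    simp only [Walk.length_append, Fintype.card_fin] at hlen₁ hlen₂ hlen₃ h₂ ⊢
    have := c.pos
    omega
  · simp only [Walk.edges_append, List.mem_append]
    rintro e (he | he | he)
    · refine ⟨I c, Or.inl rfl, ?_⟩
      simpa using p₁.edges_map_eval_of_eqOn_ne hp₁
        (fun i hi => (update_of_ne hi a I).symm) e he
    · refine ⟨a, Or.inr (Or.inr rfl), ?_⟩
      simpa using p₂.edges_map_eval_of_eq hp₂ (c := c) (by simp) e he
    · refine ⟨J c, Or.inr (Or.inl rfl), ?_⟩
      simpa [Sym2.eq_swap] using p₃.edges_map_eval_of_eqOn_ne hp₃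
        (fun i hi => update_of_ne hi a J) e he

end hammingGraph

theorem stmt_13_general (n k : ℕ)
    (I J : Fin k → Fin n) (hIJ : I ≠ J) :
    ∃ P : Fin (n - 1) → (hammingGraph n k).Walk I J,
      (∀ i, (P i).IsPath ∧ (P i).length ≤ k + 1) ∧
      ∀ i j, i ≠ j → ∀ e ∈ (P i).edges, e ∉ (P j).edges := by
  obtain ⟨c, -⟩ := Function.ne_iff.1 hIJ
  choose W hWlen hWedges using
    fun a : {a // a ≠ J c} => hammingGraph.exists_walk_edges_map_eval I J c a
  let σ : Fin (n - 1) ≃ {a // a ≠ J c} := (Fintype.equivFinOfCardEq (by simp)).symm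
  refine ⟨fun i => (W (σ i)).bypass,
    fun i => ⟨(W _).bypass_isPath, ((W _).length_bypass_le_length).trans (hWlen _)⟩, ?_⟩
  intro i j hij e hei hej
  obtain ⟨x, hx, hxe⟩ := hWedges _ e ((W _).edges_bypass_subset_edges hei)
  obtain ⟨y, hy, hye⟩ := hWedges _ e ((W _).edges_bypass_subset_edges hej)
  exact Sym2.mk_ne_mk_of_mem_triple (fun h => hij (σ.injective (Subtype.ext h)))
    (σ i).2 (σ j).2 hx hy (hxe.symm.trans hye)

theorem stmt_13 (n k : ℕ) (hn : 3 ≤ n) (hk : 1 ≤ k)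
    (I J : Fin k → Fin n) (hIJ : I ≠ J) :
    ∃ P : Fin (n - 1) → (hammingGraph n k).Walk I J,
      (∀ i, (P i).IsPath ∧ (P i).length ≤ k + 1) ∧
      ∀ i j, i ≠ j → ∀ e ∈ (P i).edges, e ∉ (P j).edges :=
  stmt_13_general n k I J hIJ
end

section
/- Let ρ be a density matrix on a bipartite Hilbert space H₁ ⊗ H₂, and define T(ρ) = (1/2)·min over separable states χ of the trace norm ‖ρ − χ‖₁, and BSA(ρ) = max{λ ∈ [0,1] : ρ = λσ + (1−λ)τ for some separable state σ and state τ}. Then BSA(ρ) ≤ 1 − T(ρ). -/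
/-!
If `ρ = l • σ + (1 - l) • τ` with `σ` separable, then `ρ - σ = (1 - l) • (τ - σ)`. The trace
distance between two states is at most `2` (diagonalise `τ - σ` and bound each eigenvalue by the
corresponding diagonal entries of `τ` and `σ`), so `σ` witnesses `T(ρ) ≤ 1 - l`.
-/

open Matrix BigOperators Kronecker
open scoped ComplexOrder

noncomputable section

/-- A density matrix: positive semidefinite with trace one. -/
def IsState {ι : Type*} [Fintype ι] [DecidableEq ι]
    (ρ : Matrix ι ι ℂ) : Prop :=
  ρ.PosSemidef ∧ ρ.trace = 1

/-- A bipartite state on `ℂ^n ⊗ ℂ^m` is separable if it is a convex combination of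
product states. -/
def IsSepState {n m : ℕ} (ρ : Matrix (Fin n × Fin m) (Fin n × Fin m) ℂ) : Prop :=
  ∃ (N : ℕ) (p : Fin N → ℝ) (σ : Fin N → Matrix (Fin n) (Fin n) ℂ)
    (τ : Fin N → Matrix (Fin m) (Fin m) ℂ),
    (∀ i, 0 ≤ p i) ∧ (∑ i, p i = 1) ∧
    (∀ i, IsState (σ i)) ∧ (∀ i, IsState (τ i)) ∧
    ρ = ∑ i, (p i : ℂ) • (σ i ⊗ₖ τ i)

/-- The trace norm of a matrix: the trace of `√(AᴴA)`. -/
def traceNorm {ι : Type*} [Fintype ι] [DecidableEq ι] (A : Matrix ι ι ℂ) : ℝ :=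
  (((Matrix.posSemidef_conjTranspose_mul_self A).1.eigenvectorUnitary.1 *
      diagonal (((↑) : ℝ → ℂ) ∘ (√·) ∘ (Matrix.posSemidef_conjTranspose_mul_self A).1.eigenvalues) *
      (star (Matrix.posSemidef_conjTranspose_mul_self A).1.eigenvectorUnitary : Matrix ι ι ℂ)).trace).re

/-- Half the minimal trace distance from `ρ` to a separable state. -/
def sepDist {n m : ℕ} (ρ : Matrix (Fin n × Fin m) (Fin n × Fin m) ℂ) : ℝ :=
  (1 / 2) * sInf {t | ∃ χ, IsState χ ∧ IsSepState χ ∧ t = traceNorm (ρ - χ)}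

/-- The best separable approximation of `ρ`: the maximal weight of a separable state
in a convex decomposition of `ρ`. -/
def BSA {n m : ℕ} (ρ : Matrix (Fin n × Fin m) (Fin n × Fin m) ℂ) : ℝ :=
  sSup {l : ℝ | l ∈ Set.Icc (0 : ℝ) 1 ∧ ∃ σ τ, IsState σ ∧ IsSepState σ ∧ IsState τ ∧
    ρ = (l : ℂ) • σ + ((1 - l : ℝ) : ℂ) • τ}

namespace Matrix

variable {ι : Type*} [Fintype ι] [DecidableEq ι]

theorem IsHermitian.re_trace_cfc {H : Matrix ι ι ℂ} (hH : H.IsHermitian) (f : ℝ → ℝ) :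
    (cfc f H).trace.re = ∑ i, f (hH.eigenvalues i) := by
  rw [hH.cfc_eq, IsHermitian.cfc, Unitary.conjStarAlgAut_apply, trace_mul_cycle,
    Unitary.coe_star_mul_self, Matrix.one_mul, trace_diagonal, Complex.re_sum]
  simp

theorem IsHermitian.sum_abs_eigenvalues_le_of_eq_sub {H P Q : Matrix ι ι ℂ}
    (hH : H.IsHermitian) (hP : P.PosSemidef) (hQ : Q.PosSemidef) (hPQ : H = P - Q) :
    ∑ i, |hH.eigenvalues i| ≤ (P.trace + Q.trace).re := by
  subst hPQ
  set U : Matrix ι ι ℂ := (hH.eigenvectorUnitary : Matrix ι ι ℂ)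
  have hdiag : ∀ i,
      hH.eigenvalues i = ((star U * P * U) i i).re - ((star U * Q * U) i i).re := by
    intro i
    have h := congrFun (congrFun hH.conjStarAlgAut_star_eigenvectorUnitary i) i
    rw [Unitary.conjStarAlgAut_star_apply] at h
    simpa [Matrix.mul_sub, Matrix.sub_mul, U] using congrArg Complex.re h.symm
  have hdiag_nonneg :
      ∀ {A : Matrix ι ι ℂ}, A.PosSemidef → ∀ i, 0 ≤ ((star U * A * U) i i).re :=
    fun hA i => (Complex.le_def.mp (hA.conjTranspose_mul_mul_same U).diag_nonneg).1
  have htrace : ∀ A : Matrix ι ι ℂ, (star U * A * U).trace = A.trace := fun A => by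
    rw [trace_mul_cycle, mem_unitaryGroup_iff.mp hH.eigenvectorUnitary.2, Matrix.one_mul]
  calc ∑ i, |hH.eigenvalues i|
      ≤ ∑ i, (((star U * P * U) i i).re + ((star U * Q * U) i i).re) := by
        refine Finset.sum_le_sum fun i _ => ?_
        rw [hdiag i]
        have hp := hdiag_nonneg hP i
        have hq := hdiag_nonneg hQ i
        exact abs_sub_le_of_nonneg_of_le hp (le_add_of_nonneg_right hq) hq
          (le_add_of_nonneg_left hp)
    _ = (P.trace + Q.trace).re := by
        rw [← htrace P, ← htrace Q, Complex.add_re, trace, trace, Complex.re_sum, Complex.re_sum,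
          Finset.sum_add_distrib]
        rfl

end Matrix

section TraceNorm

variable {ι : Type*} [Fintype ι] [DecidableEq ι]

theorem traceNorm_eq_re_trace_cfc_sqrt (A : Matrix ι ι ℂ) :
    traceNorm A = (cfc Real.sqrt (Aᴴ * A)).trace.re := by
  rw [(posSemidef_conjTranspose_mul_self A).1.cfc_eq, IsHermitian.cfc,
    Unitary.conjStarAlgAut_apply]
  rfl

theorem traceNorm_nonneg (A : Matrix ι ι ℂ) : 0 ≤ traceNorm A := by
  rw [traceNorm_eq_re_trace_cfc_sqrt, (posSemidef_conjTranspose_mul_self A).1.re_trace_cfc]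
  exact Finset.sum_nonneg fun i _ => Real.sqrt_nonneg _

theorem Matrix.IsHermitian.traceNorm_eq_sum_abs_eigenvalues {H : Matrix ι ι ℂ}
    (hH : H.IsHermitian) : traceNorm H = ∑ i, |hH.eigenvalues i| := by
  rw [traceNorm_eq_re_trace_cfc_sqrt, hH.eq, ← sq,
    ← cfc_comp_pow Real.sqrt 2 H (ha := hH.isSelfAdjoint)]
  simp_rw [Real.sqrt_sq_eq_abs]
  exact hH.re_trace_cfc _

theorem traceNorm_ofReal_smul {c : ℝ} (hc : 0 ≤ c) (A : Matrix ι ι ℂ) :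
    traceNorm ((c : ℂ) • A) = c * traceNorm A := by
  have hsq : ((c : ℂ) • A)ᴴ * ((c : ℂ) • A) = (c ^ 2) • (Aᴴ * A) := by
    rw [conjTranspose_smul, Complex.star_def, Complex.conj_ofReal, smul_mul_smul_comm,
      ← Complex.ofReal_mul, ← sq, ← Complex.coe_smul]
  have hsqrt : (fun x => √(c ^ 2 * x)) = fun x => c * √x := by
    ext x
    rw [Real.sqrt_mul (sq_nonneg c), Real.sqrt_sq hc]
  rw [traceNorm_eq_re_trace_cfc_sqrt, traceNorm_eq_re_trace_cfc_sqrt, hsq,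
    ← cfc_comp_const_mul (c ^ 2) Real.sqrt (Aᴴ * A)
      (ha := (posSemidef_conjTranspose_mul_self A).1.isSelfAdjoint),
    hsqrt, cfc_const_mul c Real.sqrt, trace_smul, Complex.smul_re, smul_eq_mul]

theorem IsState.traceNorm_sub_le_two {σ τ : Matrix ι ι ℂ} (hσ : IsState σ) (hτ : IsState τ) :
    traceNorm (σ - τ) ≤ 2 := by
  have hH : (σ - τ).IsHermitian := hσ.1.1.sub hτ.1.1
  rw [hH.traceNorm_eq_sum_abs_eigenvalues]
  have := hH.sum_abs_eigenvalues_le_of_eq_sub hσ.1 hτ.1 rfl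
  rwa [hσ.2, hτ.2, show ((1 : ℂ) + 1).re = 2 by norm_num] at this

end TraceNorm

section SepDist

variable {n m : ℕ} {ρ : Matrix (Fin n × Fin m) (Fin n × Fin m) ℂ}

theorem sepDist_le {χ : Matrix (Fin n × Fin m) (Fin n × Fin m) ℂ} (hχ : IsState χ)
    (hχsep : IsSepState χ) : sepDist ρ ≤ traceNorm (ρ - χ) / 2 := by
  have hbdd : BddBelow {t | ∃ χ, IsState χ ∧ IsSepState χ ∧ t = traceNorm (ρ - χ)} :=
    ⟨0, by rintro t ⟨χ, -, -, rfl⟩; exact traceNorm_nonneg _⟩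
  have := csInf_le hbdd ⟨χ, hχ, hχsep, rfl⟩
  rw [sepDist]
  linarith

theorem sepDist_le_one (hρ : IsState ρ) : sepDist ρ ≤ 1 := by
  rcases Set.eq_empty_or_nonempty {t | ∃ χ, IsState χ ∧ IsSepState χ ∧ t = traceNorm (ρ - χ)}
    with hempty | ⟨-, χ, hχ, hχsep, -⟩
  · rw [sepDist, hempty, Real.sInf_empty]
    norm_num
  · linarith [sepDist_le (ρ := ρ) hχ hχsep, hρ.traceNorm_sub_le_two hχ]

theorem sepDist_le_one_sub {l : ℝ} (hl : l ≤ 1)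
    {σ τ : Matrix (Fin n × Fin m) (Fin n × Fin m) ℂ} (hσ : IsState σ) (hσsep : IsSepState σ)
    (hτ : IsState τ)
    (hρ : ρ = (l : ℂ) • σ + ((1 - l : ℝ) : ℂ) • τ) : sepDist ρ ≤ 1 - l := by
  have hdiff : ρ - σ = ((1 - l : ℝ) : ℂ) • (τ - σ) := by
    rw [hρ, Complex.ofReal_sub, Complex.ofReal_one]
    simp only [smul_sub, sub_smul, one_smul]
    abel
  have hnorm : traceNorm (ρ - σ) ≤ (1 - l) * 2 := by
    rw [hdiff, traceNorm_ofReal_smul (by linarith)]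
    exact mul_le_mul_of_nonneg_left (hτ.traceNorm_sub_le_two hσ) (by linarith)
  linarith [sepDist_le (ρ := ρ) hσ hσsep]

end SepDist

theorem stmt_15_general {n m : ℕ}
    (ρ : Matrix (Fin n × Fin m) (Fin n × Fin m) ℂ) (hρ : IsState ρ) :
    BSA ρ ≤ 1 - sepDist ρ := by
  -- `Real.sSup_le` also covers an empty set of weights, where `sSup ∅ = 0`.
  refine Real.sSup_le ?_ (by linarith [sepDist_le_one hρ])
  rintro l ⟨⟨-, hl⟩, σ, τ, hσ, hσsep, hτ, hdecomp⟩
  linarith [sepDist_le_one_sub hl hσ hσsep hτ hdecomp]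

theorem stmt_15 {n m : ℕ} (hn : 1 ≤ n) (hm : 1 ≤ m)
    (ρ : Matrix (Fin n × Fin m) (Fin n × Fin m) ℂ) (hρ : IsState ρ) :
    BSA ρ ≤ 1 - sepDist ρ :=
  stmt_15_general ρ hρ
end
end

section
/- For the d-dimensional isotropic state ρ(p,d) = p·φ⁺_d + (1−p)·Id/d², where φ⁺_d is the projection onto the maximally entangled state (1/√d)Σ|ii⟩, and for p ≥ 1/(d+1), the best separable approximation satisfies BSA(ρ(p,d)) = ((d+1)/d)(1−p). -/
open Matrix BigOperators Kronecker
open scoped ComplexOrder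

noncomputable section

/-- The projection onto the `d`-dimensional maximally entangled state
`(1/√d) ∑ᵢ |ii⟩`. -/
def maxEnt (d : ℕ) : Matrix (Fin d × Fin d) (Fin d × Fin d) ℂ :=
  Matrix.of fun p q => if p.1 = p.2 ∧ q.1 = q.2 then (1 / (d : ℂ)) else 0

/-- The `d`-dimensional isotropic state with visibility `p`. -/
def isotropic (d : ℕ) (p : ℝ) : Matrix (Fin d × Fin d) (Fin d × Fin d) ℂ :=
  (p : ℂ) • maxEnt d + ((1 - p : ℝ) : ℂ) • (((d : ℂ) ^ 2)⁻¹ • (1 : Matrix _ _ ℂ))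

/-! Pair everything with the projection `Φ = maxEnt d`. A product state satisfies
`Tr((A ⊗ B) Φ) = Tr(A Bᵀ) / d ≤ 1 / d`, because `Tr(X Y) = Tr((X ⊗ Y) SWAP) ≤ 1` for states
`X, Y` (as `1 - SWAP ≥ 0`); so every separable `σ` has `Tr(σ Φ) ≤ 1 / d`, every state `τ` has
`Tr(τ Φ) ≤ 1`, and `Tr(ρ(p) Φ) = p + (1 - p) / d²` turns `ρ(p) = λ σ + (1 - λ) τ` into
`λ ≤ (d + 1)(1 - p) / d`.

Conversely `ρ(p)` is affine in `p` with `ρ(1) = Φ`, so `ρ(p) = λ ρ(1/(d+1)) + (1 - λ) Φ` for that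
value of `λ`, and `ρ(1/(d+1))` is separable: averaging `ψ_v ψ_v* ⊗ conj (ψ_v ψ_v*)` over the phase
vectors `ψ_v = d^{-1/2} (ω ^ v i)ᵢ`, `v ∈ (ℤ/3)^d`, `ω = exp (2πi/3)`, keeps exactly the entries
`((i, i'), (j, j'))` with `i = j ∧ i' = j'` or `i = i' ∧ j = j'`; adding the product states
`|ll⟩⟨ll|` for the entries counted twice gives a multiple of `ρ(1/(d+1))`. -/

section States

variable {n m : Type*} [Fintype n] [Fintype m]

lemma Matrix.PosSemidef.trace_mul_nonneg {A B : Matrix n n ℂ} (hA : A.PosSemidef)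
    (hB : B.PosSemidef) : 0 ≤ (A * B).trace := by
  classical
  open scoped MatrixOrder in
  obtain ⟨C, rfl⟩ := CStarAlgebra.nonneg_iff_eq_star_mul_self.mp hB.nonneg
  rw [← Matrix.mul_assoc, Matrix.trace_mul_comm, ← Matrix.mul_assoc]
  exact (hA.mul_mul_conjTranspose_same C).trace_nonneg

lemma Matrix.IsHermitian.posSemidef_of_isIdempotentElem {A : Matrix n n ℂ}
    (hA : A.IsHermitian) (h : IsIdempotentElem A) : A.PosSemidef := by
  simpa [hA.eq, h.eq] using posSemidef_conjTranspose_mul_self A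

variable [DecidableEq n] [DecidableEq m]

lemma Matrix.IsHermitian.posSemidef_one_sub_of_mul_self_eq_one {S : Matrix n n ℂ}
    (hS : S.IsHermitian) (h : S * S = 1) : (1 - S).PosSemidef := by
  have h2 : 1 - S = (2⁻¹ : ℝ) • ((1 - S)ᴴ * (1 - S)) := by
    rw [conjTranspose_sub, hS.eq, conjTranspose_one, sub_mul, mul_sub, mul_sub, h]
    simp only [mul_one, one_mul]
    module
  rw [h2]
  exact (posSemidef_conjTranspose_mul_self _).smul (by norm_num)

lemma IsState.re_trace_mul_le_one_of_posSemidef_one_sub {X M : Matrix n n ℂ} (hX : IsState X)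
    (hM : (1 - M).PosSemidef) : (X * M).trace.re ≤ 1 := by
  have h := (Complex.le_def.mp (hX.1.trace_mul_nonneg hM)).1
  rw [mul_sub, mul_one, trace_sub, hX.2] at h
  simpa using h

lemma IsState.kronecker {A : Matrix n n ℂ} {B : Matrix m m ℂ} (hA : IsState A)
    (hB : IsState B) : IsState (A ⊗ₖ B) :=
  ⟨hA.1.kronecker hB.1, by rw [trace_kronecker, hA.2, hB.2, one_mul]⟩

lemma IsState.transpose {A : Matrix n n ℂ} (hA : IsState A) : IsState Aᵀ :=
  ⟨hA.1.transpose, by rw [trace_transpose, hA.2]⟩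

end States

section Swap

variable {n : Type*} [DecidableEq n]

def swapMatrix (n : Type*) [DecidableEq n] : Matrix (n × n) (n × n) ℂ :=
  Matrix.of fun p q => if p = q.swap then 1 else 0

lemma isHermitian_swapMatrix : (swapMatrix n).IsHermitian := by
  ext p q
  simp [swapMatrix, Prod.ext_iff, eq_comm, and_comm]

variable [Fintype n]

lemma swapMatrix_mul_self : swapMatrix n * swapMatrix n = 1 := by
  ext ⟨a, b⟩ ⟨c, e⟩
  simp [swapMatrix, mul_apply, one_apply, ite_and]

lemma trace_kronecker_mul_swapMatrix (A B : Matrix n n ℂ) :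
    ((A ⊗ₖ B) * swapMatrix n).trace = (A * B).trace := by
  simp [swapMatrix, trace, mul_apply, Fintype.sum_prod_type]

lemma IsState.re_trace_mul_le_one {A B : Matrix n n ℂ} (hA : IsState A) (hB : IsState B) :
    (A * B).trace.re ≤ 1 := by
  rw [← trace_kronecker_mul_swapMatrix]
  exact (hA.kronecker hB).re_trace_mul_le_one_of_posSemidef_one_sub
    (isHermitian_swapMatrix.posSemidef_one_sub_of_mul_self_eq_one swapMatrix_mul_self)

end Swap

section MaxEnt

variable {d : ℕ}

lemma isHermitian_maxEnt : (maxEnt d).IsHermitian := by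
  ext p q
  simp only [maxEnt, conjTranspose_apply, of_apply, and_comm]
  split_ifs <;> simp

lemma isIdempotentElem_maxEnt (hd : d ≠ 0) : IsIdempotentElem (maxEnt d) := by
  ext ⟨a, b⟩ ⟨c, e⟩
  by_cases hab : a = b <;> by_cases hce : c = e <;>
    simp [maxEnt, mul_apply, Fintype.sum_prod_type, ite_and, hab, hce]
  field_simp

lemma trace_maxEnt (hd : d ≠ 0) : (maxEnt d).trace = 1 := by
  simp [maxEnt, trace, Fintype.sum_prod_type, hd]

lemma isState_maxEnt (hd : d ≠ 0) : IsState (maxEnt d) :=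
  ⟨isHermitian_maxEnt.posSemidef_of_isIdempotentElem (isIdempotentElem_maxEnt hd),
    trace_maxEnt hd⟩

lemma trace_kronecker_mul_maxEnt (A B : Matrix (Fin d) (Fin d) ℂ) :
    ((A ⊗ₖ B) * maxEnt d).trace = (A * Bᵀ).trace / d := by
  simp [maxEnt, trace, mul_apply, Fintype.sum_prod_type, ite_and, div_eq_mul_inv, Finset.sum_mul]

lemma IsSepState.re_trace_mul_maxEnt_le {σ : Matrix (Fin d × Fin d) (Fin d × Fin d) ℂ}
    (hσ : IsSepState σ) : (σ * maxEnt d).trace.re ≤ 1 / d := by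
  obtain ⟨N, q, A, B, hq₀, hq₁, hA, hB, rfl⟩ := hσ
  have hproduct (i : Fin N) : ((A i ⊗ₖ B i) * maxEnt d).trace.re ≤ 1 / d := by
    rw [trace_kronecker_mul_maxEnt, Complex.div_natCast_re]
    exact div_le_div_of_nonneg_right ((hA i).re_trace_mul_le_one (hB i).transpose)
      d.cast_nonneg
  calc (((∑ i, (q i : ℂ) • (A i ⊗ₖ B i)) * maxEnt d).trace).re
      = ∑ i, q i * ((A i ⊗ₖ B i) * maxEnt d).trace.re := by
        simp [Finset.sum_mul, trace_sum, Complex.re_sum]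
    _ ≤ ∑ i, q i * (1 / d) := by gcongr with i; exacts [hq₀ i, hproduct i]
    _ = 1 / d := by rw [← Finset.sum_mul, hq₁, one_mul]

end MaxEnt

section Isotropic

variable {d : ℕ}

lemma isotropic_one : isotropic d 1 = maxEnt d := by
  simp [isotropic]

lemma isotropic_affine (t p q : ℝ) :
    isotropic d (t * p + (1 - t) * q)
      = (t : ℂ) • isotropic d p + ((1 - t : ℝ) : ℂ) • isotropic d q := by
  simp only [isotropic]
  push_cast
  module

lemma isState_isotropic (hd : d ≠ 0) {p : ℝ} (hp₀ : 0 ≤ p) (hp₁ : p ≤ 1) :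
    IsState (isotropic d p) := by
  refine ⟨?_, ?_⟩
  · have h : isotropic d p
        = (p : ℂ) • maxEnt d + (((1 - p) / d ^ 2 : ℝ) : ℂ) • (1 : Matrix _ _ ℂ) := by
      simp only [isotropic, smul_smul]
      push_cast
      ring_nf
    rw [h]
    exact ((isState_maxEnt hd).1.smul (Complex.zero_le_real.mpr hp₀)).add
      (PosSemidef.one.smul (Complex.zero_le_real.mpr (by positivity)))
  · simp [isotropic, trace_maxEnt hd]
    field_simp
    ring

lemma re_trace_isotropic_mul_maxEnt (hd : d ≠ 0) (p : ℝ) :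
    (isotropic d p * maxEnt d).trace.re = p + (1 - p) / d ^ 2 := by
  have h : (isotropic d p * maxEnt d).trace = ((p + (1 - p) / d ^ 2 : ℝ) : ℂ) := by
    simp [isotropic, add_mul, (isIdempotentElem_maxEnt hd).eq, trace_maxEnt hd, div_eq_mul_inv]
  rw [h, Complex.ofReal_re]

lemma le_of_isotropic_eq_smul_add_smul (hd : 2 ≤ d) {p l : ℝ} (hl : 0 ≤ l ∧ l ≤ 1)
    {σ τ : Matrix (Fin d × Fin d) (Fin d × Fin d) ℂ} (hσ : IsSepState σ) (hτ : IsState τ)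
    (h : isotropic d p = (l : ℂ) • σ + ((1 - l : ℝ) : ℂ) • τ) :
    l ≤ ((d : ℝ) + 1) / d * (1 - p) := by
  have hd₀ : d ≠ 0 := by omega
  have hdR : (2 : ℝ) ≤ d := by exact_mod_cast hd
  have htrace : p + (1 - p) / d ^ 2
      = l * (σ * maxEnt d).trace.re + (1 - l) * (τ * maxEnt d).trace.re := by
    rw [← re_trace_isotropic_mul_maxEnt hd₀, h]
    simp [add_mul]
  have hσΦ := hσ.re_trace_mul_maxEnt_le
  have hτΦ := hτ.re_trace_mul_le_one (isState_maxEnt hd₀)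
  have key : p + (1 - p) / d ^ 2 ≤ l * (1 / d) + (1 - l) := by
    rw [htrace]
    nlinarith
  have key' : (d - 1) * (l * d) ≤ (d - 1) * ((d + 1) * (1 - p)) := by
    field_simp at key
    nlinarith
  rw [div_mul_eq_mul_div, le_div_iff₀ (by positivity)]
  exact le_of_mul_le_mul_left key' (by linarith)

end Isotropic

section PhaseStates

variable {n : Type*}

lemma forall_sub_sub_add_eq_zero_iff [DecidableEq n] {i j i' j' : n} :
    (∀ v : n → ZMod 3, v i - v j - v i' + v j' = 0) ↔ (i = j ∧ i' = j') ∨ (i = i' ∧ j = j') := by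
  refine ⟨fun h => ?_, ?_⟩
  · have hi := h (Pi.single i 1)
    have hi' := h (Pi.single i' 1)
    have hj := h (Pi.single j 1)
    simp only [Pi.single_apply] at hi hi' hj
    grind
  · rintro (⟨rfl, rfl⟩ | ⟨rfl, rfl⟩) v <;> ring

variable [Fintype n]

-- Cube roots of unity rather than signs: with phases `±1` the third pairing
-- `i = j' ∧ j = i'` (the swap) would survive the averaging as well.
def phaseVec (v : n → ZMod 3) : n → ℂ := fun i => ZMod.stdAddChar (v i)

def phaseState (v : n → ZMod 3) : Matrix n n ℂ :=
  (Fintype.card n : ℝ)⁻¹ • vecMulVec (phaseVec v) (star (phaseVec v))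

lemma phaseState_apply (v : n → ZMod 3) (i j : n) :
    phaseState v i j = ZMod.stdAddChar (v i - v j) / Fintype.card n := by
  simp [phaseState, phaseVec, vecMulVec_apply, sub_eq_add_neg, AddChar.map_add_eq_mul,
    AddChar.map_neg_eq_conj, div_eq_inv_mul]

variable [DecidableEq n]

lemma isState_phaseState [Nonempty n] (v : n → ZMod 3) : IsState (phaseState v) := by
  refine ⟨(posSemidef_vecMulVec_self_star _).smul (by positivity), ?_⟩
  simp [trace, phaseState_apply]

lemma sum_stdAddChar_sub_sub_add (i j i' j' : n) :
    ∑ v : n → ZMod 3, ZMod.stdAddChar (v i - v j - v i' + v j')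
      = if (i = j ∧ i' = j') ∨ (i = i' ∧ j = j') then (3 : ℂ) ^ Fintype.card n else 0 := by
  let e : n → (n → ZMod 3) →+ ZMod 3 := Pi.evalAddMonoidHom fun _ => ZMod 3
  let f := e i - e j - e i' + e j'
  have hf : (ZMod.stdAddChar (N := 3)).compAddMonoidHom f = 0
      ↔ (i = j ∧ i' = j') ∨ (i = i' ∧ j = j') := by
    rw [← forall_sub_sub_add_eq_zero_iff, AddChar.ext_iff]
    refine forall_congr' fun v => ?_
    rw [AddChar.compAddMonoidHom_apply, AddChar.zero_apply,
      ← AddChar.map_zero_eq_one (ZMod.stdAddChar (N := 3)), ZMod.injective_stdAddChar.eq_iff]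
    rfl
  classical
  calc ∑ v : n → ZMod 3, ZMod.stdAddChar (v i - v j - v i' + v j')
      = ∑ v, (ZMod.stdAddChar (N := 3)).compAddMonoidHom f v := rfl
    _ = _ := by rw [AddChar.sum_eq_ite]; simp [hf]

lemma sum_phaseState_kronecker_apply (i i' j j' : n) :
    (∑ v : n → ZMod 3, phaseState v ⊗ₖ phaseState (-v)) (i, i') (j, j')
      = (if (i = j ∧ i' = j') ∨ (i = i' ∧ j = j') then (3 : ℂ) ^ Fintype.card n else 0)
        / Fintype.card n ^ 2 := by
  simp only [Matrix.sum_apply, kronecker_apply, phaseState_apply, Pi.neg_apply]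
  rw [← sum_stdAddChar_sub_sub_add, Finset.sum_div]
  refine Finset.sum_congr rfl fun v _ => ?_
  rw [div_mul_div_comm, ← AddChar.map_add_eq_mul, sq]
  ring_nf

lemma isState_single (l : n) : IsState (single l l (1 : ℂ)) :=
  ⟨diagonal_single l (1 : ℂ) ▸ PosSemidef.diagonal (Pi.single_nonneg.2 zero_le_one),
    trace_single_eq_same l 1⟩

lemma sum_single_kronecker_apply (i i' j j' : n) :
    (∑ l : n, single l l (1 : ℂ) ⊗ₖ single l l 1) (i, i') (j, j')
      = if (i = j ∧ i' = j') ∧ (i = i' ∧ j = j') then 1 else 0 := by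
  simp only [Matrix.sum_apply, kronecker_apply, single_apply]
  split_ifs with h
  · obtain ⟨⟨rfl, rfl⟩, rfl, -⟩ := h
    simp
  · refine Finset.sum_eq_zero fun c _ => ?_
    grind

end PhaseStates

lemma isSepState_sum_smul_kronecker {d : ℕ} {ι : Type*} [Fintype ι] (q : ι → ℝ)
    (A B : ι → Matrix (Fin d) (Fin d) ℂ) (hq₀ : ∀ i, 0 ≤ q i) (hq₁ : ∑ i, q i = 1)
    (hA : ∀ i, IsState (A i)) (hB : ∀ i, IsState (B i)) :
    IsSepState (∑ i, (q i : ℂ) • (A i ⊗ₖ B i)) := by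
  let e := (Fintype.equivFin ι).symm
  refine ⟨Fintype.card ι, q ∘ e, A ∘ e, B ∘ e, fun i => hq₀ (e i), ?_, fun i => hA (e i),
    fun i => hB (e i), ?_⟩
  · rw [← hq₁]
    exact e.sum_comp q
  · exact (e.sum_comp fun i => (q i : ℂ) • (A i ⊗ₖ B i)).symm

section Separable

variable {d : ℕ}

lemma isotropic_inv_succ_eq_sum (hd : d ≠ 0) :
    isotropic d (1 / (d + 1))
      = ∑ v : Fin d → ZMod 3,
          ((d / ((d + 1) * 3 ^ d) : ℝ) : ℂ) • (phaseState v ⊗ₖ phaseState (-v))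
        + ∑ l : Fin d, ((1 / (d * (d + 1)) : ℝ) : ℂ) • (single l l 1 ⊗ₖ single l l 1) := by
  rw [← Finset.smul_sum, ← Finset.smul_sum]
  ext ⟨i, i'⟩ ⟨j, j'⟩
  simp only [isotropic, Matrix.add_apply, Matrix.smul_apply, sum_phaseState_kronecker_apply,
    sum_single_kronecker_apply, maxEnt, of_apply, one_apply, Prod.mk.injEq, Fintype.card_fin,
    smul_eq_mul]
  have : (d : ℂ) ≠ 0 := by exact_mod_cast hd
  have : (d : ℂ) + 1 ≠ 0 := by norm_cast
  split_ifs <;> first | (exfalso; tauto) | (push_cast; field_simp; ring)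

lemma isSepState_isotropic_inv_succ (hd : d ≠ 0) :
    IsSepState (isotropic d (1 / (d + 1))) := by
  have : NeZero d := ⟨hd⟩
  have hsep := isSepState_sum_smul_kronecker (ι := (Fin d → ZMod 3) ⊕ Fin d)
    (Sum.elim (fun _ => d / ((d + 1) * 3 ^ d)) fun _ => 1 / (d * (d + 1)))
    (Sum.elim phaseState fun l => single l l 1)
    (Sum.elim (fun v => phaseState (-v)) fun l => single l l 1) ?_ ?_ ?_ ?_
  · simp only [Fintype.sum_sum_type, Sum.elim_inl, Sum.elim_inr] at hsep
    rwa [isotropic_inv_succ_eq_sum hd]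
  · rintro (v | l) <;> simp only [Sum.elim_inl, Sum.elim_inr] <;> positivity
  · simp
    field_simp
  all_goals
    rintro (v | l)
    exacts [isState_phaseState _, isState_single l]

end Separable

theorem stmt_16 (d : ℕ) (hd : 2 ≤ d) (p : ℝ)
    (hp₁ : 1 / ((d : ℝ) + 1) ≤ p) (hp₂ : p ≤ 1) :
    BSA (isotropic d p) = ((d : ℝ) + 1) / (d : ℝ) * (1 - p) := by
  have hd₀ : d ≠ 0 := by omega
  have hdR : (0 : ℝ) < d := by positivity
  set t := ((d : ℝ) + 1) / d * (1 - p) with ht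
  have ht₀ : 0 ≤ t := mul_nonneg (by positivity) (by linarith)
  have ht₁ : t ≤ 1 := by
    rw [div_le_iff₀ (by positivity)] at hp₁
    rw [ht, div_mul_eq_mul_div, div_le_one hdR]
    nlinarith
  have hdecomp : isotropic d p
      = (t : ℂ) • isotropic d (1 / (d + 1)) + ((1 - t : ℝ) : ℂ) • maxEnt d := by
    rw [← isotropic_one, ← isotropic_affine, ht]
    congr 1
    field_simp
    ring
  refine IsGreatest.csSup_eq ⟨⟨⟨ht₀, ht₁⟩, _, _, isState_isotropic hd₀ (by positivity) ?_,
    isSepState_isotropic_inv_succ hd₀, isState_maxEnt hd₀, hdecomp⟩, ?_⟩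
  · rw [div_le_one (by positivity)]
    linarith
  · rintro l ⟨hl, σ, τ, -, hσ, hτ, h⟩
    exact le_of_isotropic_eq_smul_add_smul hd hl hσ hτ h
end
end

section
/- Let f : ℕ → ℕ satisfy f(n)/n → 0 and f(n) ≥ 1 eventually, and set g(n) = n/f(n). Define g̃(n) = inf_{k ≥ n} g(k) and k(n) = ⌈g̃(n)⌉. Then g̃(n) → ∞, k(n) → ∞, and for all sufficiently large n, (n − 1)/f(n·k(n)) ≥ 1/4, i.e., the graph sequence with minimum degree n − 1 and order n·k(n) has minimum degree in Ω(f(order)). -/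
open Filter

theorem stmt_18 (f : ℕ → ℕ)
    (hf : Filter.Tendsto (fun n => (f n : ℝ) / (n : ℝ)) Filter.atTop (nhds 0))
    (hf1 : ∀ᶠ n in Filter.atTop, 1 ≤ f n)
    (g : ℕ → ℝ) (hg : ∀ n, g n = (n : ℝ) / (f n : ℝ))
    (gt : ℕ → ℝ) (hgt : ∀ n, gt n = ⨅ m : {m : ℕ // n ≤ m}, g m)
    (k : ℕ → ℕ) (hk : ∀ n, k n = ⌈gt n⌉₊) :
    Filter.Tendsto gt Filter.atTop Filter.atTop ∧
    Filter.Tendsto (fun n => (k n : ℝ)) Filter.atTop Filter.atTop ∧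
    ∀ᶠ n : ℕ in Filter.atTop, ((n : ℝ) - 1) / (f (n * k n) : ℝ) ≥ 1 / 4 := by
  have hg0 : ∀ m, 0 ≤ g m := fun m => by rw [hg]; positivity
  have hbdd : ∀ n : ℕ, BddBelow (Set.range fun m : {m : ℕ // n ≤ m} => g m.1) :=
    fun n => ⟨0, by rintro x ⟨m, rfl⟩; exact hg0 m⟩
  have hne : ∀ n : ℕ, Nonempty {m : ℕ // n ≤ m} := fun n => ⟨⟨n, le_rfl⟩⟩
  have hgt_le : ∀ n m : ℕ, n ≤ m → gt n ≤ g m := by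
    intro n m h
    rw [hgt]
    exact ciInf_le (hbdd n) ⟨m, h⟩
  obtain ⟨N₀, hN₀⟩ := eventually_atTop.mp hf1
  have hglarge : ∀ C : ℝ, 0 < C → ∀ᶠ m : ℕ in atTop, C ≤ g m := by
    intro C hC
    have h1 : ∀ᶠ m : ℕ in atTop, (f m : ℝ) / (m : ℝ) < 1 / C :=
      hf.eventually (eventually_lt_nhds (by positivity))
    filter_upwards [h1, eventually_ge_atTop N₀, eventually_ge_atTop 1] with m hm hm0 hm1
    have hf1m : (1 : ℝ) ≤ (f m : ℝ) := by exact_mod_cast hN₀ m hm0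
    have hfpos : (0 : ℝ) < (f m : ℝ) := lt_of_lt_of_le one_pos hf1m
    have hmpos : (0 : ℝ) < (m : ℝ) := by exact_mod_cast hm1
    rw [hg, le_div_iff₀ hfpos]
    rw [div_lt_div_iff₀ hmpos hC] at hm
    nlinarith
  have hgt_tendsto : Tendsto gt atTop atTop := by
    rw [tendsto_atTop]
    intro b
    have hC : (0 : ℝ) < max b 1 := lt_of_lt_of_le one_pos (le_max_right _ _)
    obtain ⟨N, hN⟩ := eventually_atTop.mp (hglarge (max b 1) hC)
    filter_upwards [eventually_ge_atTop N] with n hn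
    calc b ≤ max b 1 := le_max_left _ _
      _ ≤ gt n := by
          rw [hgt]
          exact le_ciInf fun i => hN i.1 (hn.trans i.2)
  refine ⟨hgt_tendsto, ?_, ?_⟩
  · refine tendsto_atTop_mono (fun n => ?_) hgt_tendsto
    rw [hk]
    exact Nat.le_ceil _
  · filter_upwards [tendsto_atTop.mp hgt_tendsto 1, eventually_ge_atTop 2,
      eventually_ge_atTop N₀] with n h1 hn2 hn0
    have hkn : (1 : ℝ) ≤ (k n : ℝ) := le_trans h1 (by rw [hk]; exact Nat.le_ceil _)
    have hkn1 : 1 ≤ k n := by exact_mod_cast hkn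
    have hnm : n ≤ n * k n := Nat.le_mul_of_pos_right n hkn1
    have hfm1 : (1 : ℝ) ≤ (f (n * k n) : ℝ) := by
      exact_mod_cast hN₀ _ (hn0.trans hnm)
    have hfpos : (0 : ℝ) < (f (n * k n) : ℝ) := lt_of_lt_of_le one_pos hfm1
    have hle : gt n ≤ (↑(n * k n) : ℝ) / (f (n * k n) : ℝ) := by
      rw [← hg]; exact hgt_le n _ hnm
    have hk2 : (k n : ℝ) ≤ 2 * gt n := by
      rw [hk]
      have := Nat.ceil_lt_add_one (le_trans one_pos.le h1)
      linarith
    have hfle : (f (n * k n) : ℝ) ≤ 2 * n := by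
      rw [le_div_iff₀ hfpos] at hle
      have hcast : ((n * k n : ℕ) : ℝ) = (n : ℝ) * (k n : ℝ) := by push_cast; ring
      rw [hcast] at hle
      have hnn : (0 : ℝ) ≤ (n : ℝ) := Nat.cast_nonneg n
      nlinarith
    have hn2' : (2 : ℝ) ≤ (n : ℝ) := by exact_mod_cast hn2
    rw [ge_iff_le, div_le_div_iff₀ (by norm_num) hfpos]
    nlinarith
end
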